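/- arXiv:math/0407227 — 7 statements merged into one kernel-verified Lean document; each statement's English description precedes it below -/
import Mathlib

section
/- Let A, A', B, B' be categories and let U : A ⥤ B, V : B ⥤ B', L : A ⥤ A', G : A' ⥤ B' be functors together with a natural isomorphism G ∘ L ≅ V ∘ U. Suppose that A' has coequalizers, that U preserves coequalizers of parallel pairs, that V preserves coequalizers of parallel pairs, and that G preserves coequalizers of parallel pairs and reflects isomorphisms. Then L preserves coequalizers of parallel pairs. -/
open CategoryTheory CategoryTheory.Limits

universe v₁ v₂ v₃ v₄ u₁ u₂ u₃ u₄

/-- If `G ∘ L ≅ V ∘ U`, `A'` has coequalizers, `U`, `V` preserve coequalizers of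
parallel pairs, and `G` preserves coequalizers of parallel pairs and reflects
isomorphisms, then `L` preserves coequalizers of parallel pairs. -/
theorem preservesCoequalizers_of_square
    {A : Type u₁} [Category.{v₁} A] {A' : Type u₂} [Category.{v₂} A']
    {B : Type u₃} [Category.{v₃} B] {B' : Type u₄} [Category.{v₄} B']
    (U : A ⥤ B) (V : B ⥤ B') (L : A ⥤ A') (G : A' ⥤ B')
    (iso : L ⋙ G ≅ U ⋙ V)
    [HasCoequalizers A']
    [PreservesColimitsOfShape WalkingParallelPair U]
    [PreservesColimitsOfShape WalkingParallelPair V]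
    [PreservesColimitsOfShape WalkingParallelPair G]
    (hrefl : ∀ {X Y : A'} (f : X ⟶ Y), IsIso (G.map f) → IsIso f) :
    PreservesColimitsOfShape WalkingParallelPair L := by
  have : G.ReflectsIsomorphisms := ⟨hrefl⟩
  have : ReflectsColimitsOfShape WalkingParallelPair G :=
    reflectsColimitsOfShape_of_reflectsIsomorphisms
  have : PreservesColimitsOfShape WalkingParallelPair (L ⋙ G) :=
    preservesColimitsOfShape_of_natIso iso.symm
  exact preservesColimitsOfShape_of_reflects_of_preserves L G
end

section
/- Let k be a commutative ring and let S be a commutative bialgebra over k, with comultiplication Δ : S → S ⊗_k S and counit ε : S → k. Let J denote the kernel of the k-algebra homomorphism S ⊗_k S → k induced by applying ε to both tensor factors. Then for every s ∈ S with ε(s) = 0, the element Δ(s) − (s ⊗ 1 + 1 ⊗ s) lies in the ideal J² of S ⊗_k S. -/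
/-!
Let `P = id - η ∘ ε` be the projection of `S` onto the augmentation ideal `ker ε`. By the counit
laws, `(P ⊗ P) (Δ s) = Δ s - s ⊗ 1 - 1 ⊗ s` whenever `ε s = 0`. On the other hand
`P a ⊗ P b = (P a ⊗ 1) * (1 ⊗ P b)` is a product of two elements killed by `ε ⊗ ε`, so the whole
image of `P ⊗ P` lies in `J²`.
-/

open Coalgebra (counit comul lTensor_counit_comul rTensor_counit_comul)

open TensorProduct

namespace Bialgebra

variable {k S : Type*} [CommRing k]

section Ring

variable [Ring S] [Bialgebra k S]

variable (k S) in
def augmentationProj : S →ₗ[k] S :=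
  LinearMap.id - Algebra.linearMap k S ∘ₗ counit

theorem augmentationProj_apply (s : S) :
    augmentationProj k S s = s - algebraMap k S (counit s) :=
  rfl

theorem counit_augmentationProj (s : S) : counit (R := k) (augmentationProj k S s) = 0 := by
  rw [augmentationProj_apply, map_sub, counit_algebraMap, sub_self]

theorem augmentationProj_of_counit_eq_zero {s : S} (hs : counit (R := k) s = 0) :
    augmentationProj k S s = s := by
  rw [augmentationProj_apply, hs, map_zero, sub_zero]

theorem lTensor_augmentationProj_comul (s : S) :
    (augmentationProj k S).lTensor S (comul s) = comul s - s ⊗ₜ[k] 1 := by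
  rw [augmentationProj, LinearMap.lTensor_sub, LinearMap.lTensor_comp, LinearMap.lTensor_id,
    LinearMap.sub_apply, LinearMap.comp_apply, lTensor_counit_comul, LinearMap.lTensor_tmul,
    Algebra.linearMap_apply, map_one, LinearMap.id_apply]

theorem rTensor_augmentationProj_comul (s : S) :
    (augmentationProj k S).rTensor S (comul s) = comul s - 1 ⊗ₜ[k] s := by
  rw [augmentationProj, LinearMap.rTensor_sub, LinearMap.rTensor_comp, LinearMap.rTensor_id,
    LinearMap.sub_apply, LinearMap.comp_apply, rTensor_counit_comul, LinearMap.rTensor_tmul,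
    Algebra.linearMap_apply, map_one, LinearMap.id_apply]

end Ring

section CommRing

variable [CommRing S] [Bialgebra k S]

variable (k S) in
def counitTensorCounit : S ⊗[k] S →ₐ[k] k :=
  Algebra.TensorProduct.lift (counitAlgHom k S) (counitAlgHom k S) fun _ _ => Commute.all _ _

theorem map_augmentationProj_mem_ker_sq (x : S ⊗[k] S) :
    map (augmentationProj k S) (augmentationProj k S) x ∈
      (RingHom.ker (counitTensorCounit k S)) ^ 2 := by
  induction x using TensorProduct.induction_on with
  | zero => simp
  | add x y hx hy => rw [map_add]; exact Ideal.add_mem _ hx hy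
  | tmul a b =>
    rw [map_tmul, sq, ← mul_one (augmentationProj k S a), ← one_mul (augmentationProj k S b),
      ← Algebra.TensorProduct.tmul_mul_tmul]
    refine Ideal.mul_mem_mul ?_ ?_ <;>
      simp [counitTensorCounit, counit_augmentationProj]

end CommRing

end Bialgebra

/-- Every element of the augmentation ideal of a commutative bialgebra is additive
up to second order: if `ε s = 0` then `Δ s − (s ⊗ 1 + 1 ⊗ s)` lies in `J²`,
where `J = ker(ε ⊗ ε : S ⊗ S → k)`. -/
theorem comul_sub_add_tmul_mem_ker_counit_sq
    (k S : Type*) [CommRing k] [CommRing S] [Bialgebra k S]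
    (s : S) (hs : Coalgebra.counit (R := k) s = 0) :
    Coalgebra.comul (R := k) s - (s ⊗ₜ[k] (1 : S) + (1 : S) ⊗ₜ[k] s) ∈
      (RingHom.ker (Algebra.TensorProduct.lift (Bialgebra.counitAlgHom k S)
        (Bialgebra.counitAlgHom k S) (fun _ _ => Commute.all _ _))) ^ 2 := by
  have h := Bialgebra.map_augmentationProj_mem_ker_sq (comul (R := k) s)
  rwa [← LinearMap.rTensor_comp_lTensor, LinearMap.comp_apply,
    Bialgebra.lTensor_augmentationProj_comul,
    map_sub, Bialgebra.rTensor_augmentationProj_comul, LinearMap.rTensor_tmul,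
    Bialgebra.augmentationProj_of_counit_eq_zero hs, sub_sub, add_comm (1 ⊗ₜ[k] s)] at h
end

section
/- Let p be a prime and let R be a commutative ring that is p-torsion-free, i.e., for all x ∈ R, p·x = 0 implies x = 0. Let f : R → R be a ring homomorphism such that f(x) − x^p lies in the ideal pR for every x ∈ R (a Frobenius lift). Then there exists a unique ring homomorphism s : R → 𝕎 R to the ring of p-typical Witt vectors of R such that for every n ∈ ℕ and every x ∈ R, the n-th ghost component of s(x) equals the n-fold iterate f^[n](x). -/
open Finset

namespace DieudonneDworkAux

variable (p : ℕ) [Fact p.Prime] {R : Type*} [CommRing R]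

/-- The `n`-th ghost value of a coefficient sequence. -/
def gw (a : ℕ → R) (n : ℕ) : R := ∑ i ∈ range (n + 1), (p : R) ^ i * a i ^ p ^ (n - i)

lemma ghost_mk (a : ℕ → R) (n : ℕ) :
    WittVector.ghostComponent n (WittVector.mk p a) = gw p a n := by
  rw [WittVector.ghostComponent_apply, WittVector.coeff_mk, aeval_wittPolynomial, gw]

lemma ghost_eq_gw (x : WittVector p R) (n : ℕ) :
    WittVector.ghostComponent n x = gw p x.coeff n := by
  rw [WittVector.ghostComponent_apply, aeval_wittPolynomial, gw]

/-- Key congruence: if `u ≡ v mod p` then `u^{p^k} ≡ v^{p^k} mod p^{k+1}`. -/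
lemma key_dvd {u v : R} (h : (p : R) ∣ u - v) :
    ∀ k : ℕ, (p : R) ^ (k + 1) ∣ u ^ p ^ k - v ^ p ^ k := by
  intro k
  induction k with
  | zero => simpa using h
  | succ k ih =>
    set a := u ^ p ^ k with ha
    set b := v ^ p ^ k with hb
    have hab : (p : R) ∣ a - b := (dvd_pow_self (p : R) (Nat.succ_ne_zero k)).trans ih
    have hgeom : (∑ i ∈ range p, a ^ i * b ^ (p - 1 - i)) * (a - b) = a ^ p - b ^ p :=
      geom_sum₂_mul a b p
    have hsum : (p : R) ∣ ∑ i ∈ range p, a ^ i * b ^ (p - 1 - i) := by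
      have h1 : (p : R) ∣ (∑ i ∈ range p, a ^ i * b ^ (p - 1 - i)) - ∑ i ∈ range p,
          b ^ (p - 1) := by
        rw [← Finset.sum_sub_distrib]
        refine Finset.dvd_sum fun i hi => ?_
        have hip : i ≤ p - 1 := Nat.le_pred_of_lt (Finset.mem_range.mp hi)
        have : b ^ (p - 1) = b ^ i * b ^ (p - 1 - i) := by
          rw [← pow_add, Nat.add_sub_cancel' hip]
        rw [this, ← sub_mul]
        exact ((hab.trans (sub_dvd_pow_sub_pow a b i)).mul_right _)
      have h2 : (p : R) ∣ ∑ i ∈ range p, b ^ (p - 1) := by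
        rw [Finset.sum_const, Finset.card_range, nsmul_eq_mul]
        exact Dvd.intro _ rfl
      simpa using dvd_add h1 h2
    have : (p : R) ^ (k + 1 + 1) ∣ (∑ i ∈ range p, a ^ i * b ^ (p - 1 - i)) * (a - b) := by
      rw [pow_succ, mul_comm ((p : R) ^ (k + 1)) (p : R)]
      exact mul_dvd_mul hsum ih
    rw [hgeom] at this
    have hrw : ∀ w : R, w ^ p ^ (k + 1) = (w ^ p ^ k) ^ p := fun w => by
      rw [← pow_mul, ← pow_succ]
    rw [hrw u, hrw v]
    exact this

variable (htf : ∀ x : R, (p : R) * x = 0 → x = 0)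

include htf in
lemma tf_pow (k : ℕ) (x : R) (h : (p : R) ^ k * x = 0) : x = 0 := by
  induction k with
  | zero => simpa using h
  | succ k ih =>
    have h' : (p : R) * ((p : R) ^ k * x) = 0 := by
      rw [← mul_assoc, ← pow_succ']; exact h
    exact ih (htf _ h')

include htf in
/-- If two sequences have equal ghost values up to `n`, they agree up to `n`. -/
lemma agree_of_gw_eq (a b : ℕ → R) (n : ℕ) (h : ∀ k ≤ n, gw p a k = gw p b k) :
    ∀ k ≤ n, a k = b k := by
  intro k hk
  induction k using Nat.strong_induction_on with
  | _ k ih =>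
    have hk' := h k hk
    rw [gw, gw, Finset.sum_range_succ, Finset.sum_range_succ] at hk'
    have hlow : ∑ i ∈ range k, (p : R) ^ i * a i ^ p ^ (k - i)
        = ∑ i ∈ range k, (p : R) ^ i * b i ^ p ^ (k - i) := by
      refine Finset.sum_congr rfl fun i hi => ?_
      rw [ih i (Finset.mem_range.mp hi) (le_trans (le_of_lt (Finset.mem_range.mp hi)) hk)]
    rw [hlow] at hk'
    have : (p : R) ^ k * (a k - b k) = 0 := by
      have := add_left_cancel hk'
      simp only [Nat.sub_self, pow_zero, pow_one] at this
      rw [mul_sub, this, sub_self]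
    exact sub_eq_zero.mp (tf_pow p htf k _ this)

variable (f : R →+* R) (hf : ∀ x : R, (p : R) ∣ f x - x ^ p)

include hf in
lemma exists_upto (x : R) : ∀ n : ℕ, ∃ a : ℕ → R, ∀ k ≤ n, gw p a k = (⇑f)^[k] x := by
  intro n
  induction n with
  | zero =>
    refine ⟨fun _ => x, fun k hk => ?_⟩
    interval_cases k
    simp [gw]
  | succ n ih =>
    obtain ⟨a, ha⟩ := ih
    -- divisibility of the next correction term
    have hiter : (⇑f)^[n + 1] x = ∑ i ∈ range (n + 1), (p : R) ^ i * f (a i) ^ p ^ (n - i) := by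
      rw [Function.iterate_succ_apply', ← ha n le_rfl, gw, map_sum]
      refine Finset.sum_congr rfl fun i hi => ?_
      rw [map_mul, map_pow, map_pow, map_natCast]
    have hdvd : (p : R) ^ (n + 1) ∣
        (⇑f)^[n + 1] x - ∑ i ∈ range (n + 1), (p : R) ^ i * a i ^ p ^ (n + 1 - i) := by
      rw [hiter, ← Finset.sum_sub_distrib]
      refine Finset.dvd_sum fun i hi => ?_
      have hin : i ≤ n := Nat.lt_succ_iff.mp (Finset.mem_range.mp hi)
      have hexp : a i ^ p ^ (n + 1 - i) = (a i ^ p) ^ p ^ (n - i) := by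
        have h1 : n + 1 - i = n - i + 1 := by omega
        rw [h1, pow_succ', pow_mul]
      rw [hexp, ← mul_sub]
      have : (p : R) ^ (n + 1) = (p : R) ^ i * (p : R) ^ (n - i + 1) := by
        rw [← pow_add]; congr 1; omega
      rw [this]
      exact mul_dvd_mul_left _ (key_dvd p (hf (a i)) (n - i))
    obtain ⟨d, hd⟩ := hdvd
    refine ⟨Function.update a (n + 1) d, fun k hk => ?_⟩
    rcases Nat.lt_succ_iff_lt_or_eq.mp (Nat.lt_succ_of_le hk) with hk | hk
    · have : gw p (Function.update a (n + 1) d) k = gw p a k := by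
        unfold gw
        refine Finset.sum_congr rfl fun i hi => ?_
        have := Finset.mem_range.mp hi
        rw [Function.update_of_ne (by omega)]
      rw [this]
      exact ha k (Nat.lt_succ_iff.mp hk)
    · subst hk
      rw [gw, Finset.sum_range_succ]
      have h1 : ∑ i ∈ range (n + 1), (p : R) ^ i * Function.update a (n + 1) d i ^ p ^ (n + 1 - i)
          = ∑ i ∈ range (n + 1), (p : R) ^ i * a i ^ p ^ (n + 1 - i) := by
        refine Finset.sum_congr rfl fun i hi => ?_
        have := Finset.mem_range.mp hi
        rw [Function.update_of_ne (by omega)]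
      rw [h1, Function.update_self, Nat.sub_self, pow_zero, pow_one]
      rw [eq_comm, ← sub_eq_iff_eq_add']
      exact hd

end DieudonneDworkAux

open DieudonneDworkAux in
/-- **Cartier's Dieudonné–Dwork lemma.** If `R` is `p`-torsion-free and `f : R → R`
is a Frobenius lift (`f x ≡ x^p mod pR`), then there is a unique ring homomorphism
`s : R → 𝕎 R` whose `n`-th ghost component is the `n`-fold iterate of `f`. -/
theorem dieudonne_dwork (p : ℕ) [Fact p.Prime] (R : Type*) [CommRing R]
    (htf : ∀ x : R, (p : R) * x = 0 → x = 0)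
    (f : R →+* R) (hf : ∀ x : R, f x - x ^ p ∈ Ideal.span {(p : R)}) :
    ∃! s : R →+* WittVector p R,
      ∀ (n : ℕ) (x : R), WittVector.ghostComponent n (s x) = (⇑f)^[n] x := by
  have hf' : ∀ x : R, (p : R) ∣ f x - x ^ p := fun x =>
    Ideal.mem_span_singleton.mp (hf x)
  -- injectivity of the ghost map on p-torsion-free rings
  have hinj : ∀ u v : WittVector p R,
      (∀ n, WittVector.ghostComponent n u = WittVector.ghostComponent n v) → u = v := by
    intro u v h
    ext n
    refine agree_of_gw_eq p htf u.coeff v.coeff n (fun k _ => ?_) n le_rfl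
    rw [← ghost_eq_gw, ← ghost_eq_gw]
    exact h k
  -- construct coefficients
  have H : ∀ (x : R) (n : ℕ), ∃ a : ℕ → R, ∀ k ≤ n, gw p a k = (⇑f)^[k] x :=
    fun x n => exists_upto p f hf' x n
  set c : R → ℕ → R := fun x n => Classical.choose (H x n) n with hc
  have hgw : ∀ (x : R) (n : ℕ), gw p (c x) n = (⇑f)^[n] x := by
    intro x n
    have hchoose : ∀ m, ∀ k ≤ m, gw p (Classical.choose (H x m)) k = (⇑f)^[k] x :=
      fun m => Classical.choose_spec (H x m)
    have hagree : ∀ i ≤ n, c x i = Classical.choose (H x n) i := by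
      intro i hi
      have h1 : ∀ k ≤ i, gw p (Classical.choose (H x i)) k
          = gw p (Classical.choose (H x n)) k :=
        fun k hk => by rw [hchoose i k hk, hchoose n k (hk.trans hi)]
      exact agree_of_gw_eq p htf _ _ i h1 i le_rfl
    have : gw p (c x) n = gw p (Classical.choose (H x n)) n := by
      unfold gw
      refine Finset.sum_congr rfl fun i hi => ?_
      exact congrArg (fun t => (p : R) ^ i * t ^ p ^ (n - i)) (hagree i (Nat.lt_succ_iff.mp (Finset.mem_range.mp hi)))
    rw [this, hchoose n n le_rfl]
  have hg : ∀ (n : ℕ) (x : R),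
      WittVector.ghostComponent n (WittVector.mk p (c x)) = (⇑f)^[n] x := by
    intro n x
    rw [ghost_mk, hgw]
  -- assemble the ring hom
  refine ⟨{ toFun := fun x => WittVector.mk p (c x)
            map_one' := ?_
            map_mul' := ?_
            map_zero' := ?_
            map_add' := ?_ }, fun n x => hg n x, ?_⟩
  · refine hinj _ _ fun n => ?_
    simp only [map_one, hg, iterate_map_one]
  · intro x y
    refine hinj _ _ fun n => ?_
    simp only [map_mul, hg, iterate_map_mul]
  · refine hinj _ _ fun n => ?_
    simp only [map_zero, hg, iterate_map_zero]
  · intro x y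
    refine hinj _ _ fun n => ?_
    simp only [map_add, hg, iterate_map_add]
  · intro t ht
    ext x : 1
    exact hinj _ _ fun n => (ht n x).trans (hg n x).symm
end

section
/- Let p be a prime and B a commutative ring. Let R = MonoidAlgebra ℤ B be the monoid algebra over ℤ on the multiplicative monoid of B, let F : R → R be the ring endomorphism induced on basis elements by b ↦ b^p, and let π : R → B be the canonical ring homomorphism sending each basis element [b] to b. Suppose s : R → 𝕎 R is a ring homomorphism to the p-typical Witt vectors of R such that for every n ∈ ℕ and x ∈ R the n-th ghost component of s(x) equals F^[n](x). Then for every b ∈ B, applying the functorial map 𝕎 π : 𝕎 R → 𝕎 B to s([b]) yields the Teichmüller lift of b, i.e., (𝕎 π)(s([b])) = teichmuller p b. -/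
open WittVector Finset

private lemma ghost_inj (p : ℕ) [Fact p.Prime] (B : Type*) [CommRing B]
    (x y : WittVector p (MonoidAlgebra ℤ B))
    (h : ∀ n, WittVector.ghostComponent n x = WittVector.ghostComponent n y) : x = y := by
  haveI : Module.IsTorsionFree ℤ (MonoidAlgebra ℤ B) :=
    inferInstance
  have key : ∀ n, x.coeff n = y.coeff n := by
    intro n
    induction n using Nat.strong_induction_on with
    | _ n ih =>
      have hg := h n
      rw [ghostComponent_apply, ghostComponent_apply, aeval_wittPolynomial,
        aeval_wittPolynomial, Finset.sum_range_succ, Finset.sum_range_succ] at hg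
      have hlow : ∑ i ∈ range n, (p : MonoidAlgebra ℤ B) ^ i * x.coeff i ^ p ^ (n - i) =
          ∑ i ∈ range n, (p : MonoidAlgebra ℤ B) ^ i * y.coeff i ^ p ^ (n - i) := by
        refine Finset.sum_congr rfl fun i hi => ?_
        rw [ih i (Finset.mem_range.mp hi)]
      rw [hlow, Nat.sub_self, pow_zero, pow_one, pow_one] at hg
      replace hg := add_left_cancel hg
      have hp : ((p : ℤ) ^ n) ≠ 0 := pow_ne_zero _ (Int.natCast_ne_zero.mpr (Fact.out : p.Prime).ne_zero)
      have : ((p : ℤ) ^ n) • x.coeff n = ((p : ℤ) ^ n) • y.coeff n := by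
        rw [zsmul_eq_mul, zsmul_eq_mul]
        push_cast
        exact_mod_cast hg
      exact smul_right_injective (MonoidAlgebra ℤ B) hp this
  exact WittVector.ext key

private lemma F_iter (p : ℕ) (B : Type*) [CommRing B] (b : B) (n : ℕ) :
    (⇑(MonoidAlgebra.mapDomainRingHom ℤ (powMonoidHom p)))^[n] (MonoidAlgebra.of ℤ B b) =
      MonoidAlgebra.of ℤ B (b ^ p ^ n) := by
  induction n with
  | zero => simp
  | succ n ih =>
    rw [Function.iterate_succ_apply', ih]
    show MonoidAlgebra.mapDomain _ (MonoidAlgebra.single _ _) = _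
    rw [MonoidAlgebra.mapDomain_single]
    simp [powMonoidHom, pow_succ, pow_mul]

/-- The Teichmüller lift via the monoid algebra: if `s` is the ring map from the
monoid algebra `R = ℤ[B]` to `𝕎 R` whose ghost components are the iterates of the
Frobenius lift `F : [b] ↦ [b^p]`, then pushing `s [b]` forward along the canonical
map `π : ℤ[B] → B` yields the Teichmüller representative of `b`. -/
theorem map_eq_teichmuller (p : ℕ) [Fact p.Prime] (B : Type*) [CommRing B]
    (s : MonoidAlgebra ℤ B →+* WittVector p (MonoidAlgebra ℤ B))
    (hs : ∀ (n : ℕ) (x : MonoidAlgebra ℤ B),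
      WittVector.ghostComponent n (s x) =
        (⇑(MonoidAlgebra.mapDomainRingHom ℤ (powMonoidHom p)))^[n] x)
    (b : B) :
    WittVector.map ((MonoidAlgebra.lift ℤ B B) (MonoidHom.id B)).toRingHom
        (s (MonoidAlgebra.of ℤ B b)) = WittVector.teichmuller p b := by
  have key : s (MonoidAlgebra.of ℤ B b) = teichmuller p (MonoidAlgebra.of ℤ B b) := by
    apply ghost_inj p B
    intro n
    rw [hs, F_iter, ghostComponent_teichmuller, ← map_pow]
  rw [key, map_teichmuller]
  congr 1
  exact MonoidAlgebra.lift_of _ b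
end

section
/- Fix k ∈ ℕ and work in the polynomial ring A = MvPolynomial (Fin k) ℤ in variables x₁, …, x_k over ℤ. Let f = ∏_{i=1}^{k} (1 − x_i·T) ∈ A⟦T⟧, and suppose (b_n)_{n ≥ 1} is a sequence in A such that for every N ≥ 1 the series f and ∏_{n=1}^{N} (1 − b_n·T^n) agree in all coefficients of degree ≤ N. Then for every m ≥ 1, the m-th power sum satisfies x₁^m + ⋯ + x_k^m = ∑_{d ∣ m} d · (b_d)^{m/d}, the sum ranging over the positive divisors d of m. -/
open PowerSeries Finset

section Aux
variable {A : Type*} [CommRing A]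

noncomputable def Dop (f : PowerSeries A) : PowerSeries A :=
  PowerSeries.mk fun m => (m : A) * PowerSeries.coeff (R := A) m f

@[simp] lemma coeff_Dop (f : PowerSeries A) (m : ℕ) :
    PowerSeries.coeff (R := A) m (Dop f) = (m : A) * PowerSeries.coeff (R := A) m f := by
  simp [Dop]

lemma Dop_mul (f g : PowerSeries A) : Dop (f * g) = Dop f * g + f * Dop g := by
  ext m
  simp only [coeff_Dop, map_add, PowerSeries.coeff_mul, Finset.mul_sum, coeff_Dop]
  rw [← Finset.sum_add_distrib]
  refine Finset.sum_congr rfl fun p hp => ?_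
  have h : p.1 + p.2 = m := Finset.HasAntidiagonal.mem_antidiagonal.mp hp
  rw [← h]
  push_cast
  ring

lemma Dop_prod {ι : Type*} [DecidableEq ι] (s : Finset ι) (h : ι → PowerSeries A) :
    Dop (∏ i ∈ s, h i) = ∑ i ∈ s, Dop (h i) * ∏ j ∈ s.erase i, h j := by
  induction s using Finset.induction_on with
  | empty =>
    ext m
    simp only [Finset.prod_empty, Finset.sum_empty, coeff_Dop, PowerSeries.coeff_one]
    split_ifs with h
    · subst h; simp
    · simp
  | @insert a s ha ih =>
    rw [Finset.prod_insert ha, Dop_mul, ih, Finset.sum_insert ha, Finset.erase_insert ha,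
      Finset.mul_sum]
    congr 1
    refine Finset.sum_congr rfl fun i hi => ?_
    have hne : i ≠ a := fun hia => ha (hia ▸ hi)
    rw [Finset.erase_insert_of_ne hne.symm,
      Finset.prod_insert (fun hmem => ha (Finset.mem_of_mem_erase hmem))]
    ring

lemma Dop_one_sub (a : A) (n : ℕ) :
    Dop (1 - PowerSeries.C (R := A) a * PowerSeries.X ^ n) =
      -(PowerSeries.C (R := A) ((n : A) * a) * PowerSeries.X ^ n) := by
  ext m
  simp only [coeff_Dop, map_sub, map_neg, PowerSeries.coeff_one, PowerSeries.coeff_C_mul,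
    PowerSeries.coeff_X_pow, mul_ite, mul_one, mul_zero]
  split_ifs with h1 h2 h2
  · subst h1; subst h2; simp
  · subst h1; simp
  · subst h2; ring
  · simp

noncomputable def Sser (n : ℕ) (a : A) : PowerSeries A :=
  PowerSeries.mk fun m => if n ∣ m ∧ m ≠ 0 then (n : A) * a ^ (m / n) else 0

lemma Sser_mul_geom (a : A) (n : ℕ) (hn : 1 ≤ n) :
    Sser n a * (1 - PowerSeries.C (R := A) a * PowerSeries.X ^ n) =
      PowerSeries.C (R := A) ((n : A) * a) * PowerSeries.X ^ n := by
  ext m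
  have hn0 : n ≠ 0 := by omega
  rw [mul_sub, mul_one, map_sub]
  rw [show Sser n a * (PowerSeries.C (R := A) a * PowerSeries.X ^ n)
      = PowerSeries.C (R := A) a * (Sser n a * PowerSeries.X ^ n) by ring]
  rw [PowerSeries.coeff_C_mul, PowerSeries.coeff_mul_X_pow', PowerSeries.coeff_C_mul,
    PowerSeries.coeff_X_pow]
  simp only [Sser, PowerSeries.coeff_mk]
  by_cases hm0 : m = 0
  · subst hm0
    simp [eq_comm (a := (0:ℕ)), hn0]
  by_cases hdvd : n ∣ m
  · obtain ⟨q, rfl⟩ := hdvd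
    have hq : 1 ≤ q := by
      rcases Nat.eq_zero_or_pos q with h | h
      · exfalso; exact hm0 (by simp [h])
      · exact h
    have hle : n ≤ n * q := Nat.le_mul_of_pos_right n hq
    rw [if_pos ⟨⟨q, rfl⟩, hm0⟩, if_pos hle]
    rw [Nat.mul_div_cancel_left q (by omega)]
    by_cases hq1 : q = 1
    · subst hq1
      simp [hn0, pow_one]
    · have hsub : n * q - n = n * (q - 1) := by
        rw [Nat.mul_sub, mul_one]
      have hne : n * q - n ≠ 0 := by
        have : n * 2 ≤ n * q := Nat.mul_le_mul_left n (by omega)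
        omega
      rw [hsub, if_pos ⟨⟨q - 1, rfl⟩, by omega⟩, Nat.mul_div_cancel_left _ (by omega)]
      have hmn : ¬ n * q = n := by
        intro h
        exact hq1 (by nlinarith)
      rw [if_neg hmn]
      have : a ^ q = a ^ (q - 1) * a := by
        conv_lhs => rw [show q = (q - 1) + 1 by omega]
        rw [pow_succ]
      rw [this]
      ring
  · rw [if_neg (by tauto)]
    have hmn : ¬ m = n := fun h => hdvd (h ▸ dvd_refl n)
    rw [if_neg hmn]
    by_cases hle : n ≤ m
    · rw [if_pos hle, if_neg]
      · ring
      · rintro ⟨hd, -⟩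
        exact hdvd ((Nat.dvd_sub hd (dvd_refl n)).elim (fun _ => by
          have := Nat.dvd_add hd (dvd_refl n)
          exact absurd (by simpa [Nat.sub_add_cancel hle] using this) (fun h => hdvd h)) )
    · rw [if_neg hle]; ring

end Aux
lemma key_identity {A : Type*} [CommRing A] {ι : Type*} [DecidableEq ι] (s : Finset ι)
    (n : ι → ℕ) (a : ι → A) (hn : ∀ i ∈ s, 1 ≤ n i) :
    (∑ i ∈ s, Sser (n i) (a i)) *
      (∏ i ∈ s, (1 - PowerSeries.C (R := A) (a i) * PowerSeries.X ^ n i)) =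
    - Dop (∏ i ∈ s, (1 - PowerSeries.C (R := A) (a i) * PowerSeries.X ^ n i)) := by
  rw [Dop_prod, Finset.sum_mul, ← Finset.sum_neg_distrib]
  refine Finset.sum_congr rfl fun i hi => ?_
  rw [Dop_one_sub, ← Finset.mul_prod_erase s _ hi, ← mul_assoc,
    Sser_mul_geom (a i) (n i) (hn i hi)]
  ring

lemma coeff_mul_congr {A : Type*} [CommRing A] (u : PowerSeries A) {f g : PowerSeries A}
    (N : ℕ) (h : ∀ i ≤ N, PowerSeries.coeff (R := A) i f = PowerSeries.coeff (R := A) i g) :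
    ∀ i ≤ N, PowerSeries.coeff (R := A) i (u * f) = PowerSeries.coeff (R := A) i (u * g) := by
  intro i hi
  rw [PowerSeries.coeff_mul, PowerSeries.coeff_mul]
  refine Finset.sum_congr rfl fun p hp => ?_
  have hp2 : p.2 ≤ i := by
    have := Finset.HasAntidiagonal.mem_antidiagonal.mp hp
    omega
  rw [h p.2 (le_trans hp2 hi)]

lemma coeff_cancel {A : Type*} [CommRing A] (f u : PowerSeries A)
    (hf : PowerSeries.coeff (R := A) 0 f = 1) (N : ℕ)
    (h : ∀ i ≤ N, PowerSeries.coeff (R := A) i (u * f) = 0) :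
    ∀ i ≤ N, PowerSeries.coeff (R := A) i u = 0 := by
  intro i
  induction i using Nat.strong_induction_on with
  | _ i ih =>
    intro hi
    have hmul := h i hi
    rw [PowerSeries.coeff_mul, Finset.sum_eq_single (i, 0)] at hmul
    · rwa [hf, mul_one] at hmul
    · intro p hp hne
      have hpm : p.1 + p.2 = i := Finset.HasAntidiagonal.mem_antidiagonal.mp hp
      have hp1 : p.1 < i := by
        rcases Nat.lt_or_ge p.1 i with h' | h'
        · exact h'
        · exfalso; apply hne
          have : p.1 = i := by omega
          have : p.2 = 0 := by omega
          exact Prod.ext (by omega) this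
      rw [ih p.1 hp1 (by omega), zero_mul]
    · intro habs
      exact absurd (Finset.HasAntidiagonal.mem_antidiagonal.mpr (by simp)) habs
/-- `b : ℕ → B` (with only the values `b n` for `n ≥ 1` relevant) is a Witt-style
factorization of the power series `f` if for every `N ≥ 1` the series `f` and the
finite product `∏_{n=1}^{N} (1 − b n · X^n)` agree in all degrees `≤ N`. -/
def IsWittFactorization (B : Type*) [CommRing B] (f : PowerSeries B) (b : ℕ → B) : Prop :=
  ∀ N : ℕ, 1 ≤ N → ∀ i ≤ N,
    PowerSeries.coeff (R := B) i f =
      PowerSeries.coeff (R := B) i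
        (∏ n ∈ Finset.Icc 1 N, (1 - PowerSeries.C (R := B) (b n) * PowerSeries.X ^ n))

set_option maxHeartbeats 1000000 in
/-- The relation `ψ_m = ∑_{d ∣ m} d · w_d^{m/d}` between power sums and the Witt
generators: if `∏_{i} (1 − x_i T) = ∏_{n ≥ 1} (1 − b_n T^n)` then
`x₁^m + ⋯ + x_k^m = ∑_{d ∣ m} d · b_d^{m/d}`. -/
theorem powerSum_eq_sum_divisors_witt (k : ℕ) (b : ℕ → MvPolynomial (Fin k) ℤ)
    (hb : IsWittFactorization (MvPolynomial (Fin k) ℤ)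
      (∏ i : Fin k,
        (1 - PowerSeries.C (R := MvPolynomial (Fin k) ℤ) (MvPolynomial.X i) * PowerSeries.X)) b)
    (m : ℕ) (hm : 1 ≤ m) :
    (∑ i : Fin k, MvPolynomial.X i ^ m) =
      ∑ d ∈ Nat.divisors m, (d : MvPolynomial (Fin k) ℤ) * b d ^ (m / d) := by
  set f : PowerSeries (MvPolynomial (Fin k) ℤ) :=
    ∏ i : Fin k,
      (1 - PowerSeries.C (R := MvPolynomial (Fin k) ℤ) (MvPolynomial.X i) * PowerSeries.X)
    with hfdef
  set g : PowerSeries (MvPolynomial (Fin k) ℤ) :=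
    ∏ n ∈ Finset.Icc 1 m, (1 - PowerSeries.C (R := MvPolynomial (Fin k) ℤ) (b n)
      * PowerSeries.X ^ n) with hgdef
  set Pf : PowerSeries (MvPolynomial (Fin k) ℤ) :=
    ∑ i : Fin k, Sser 1 (MvPolynomial.X i) with hPf
  set Pg : PowerSeries (MvPolynomial (Fin k) ℤ) :=
    ∑ n ∈ Finset.Icc 1 m, Sser n (b n) with hPg
  have hkf : Pf * f = - Dop f := by
    have := key_identity (A := MvPolynomial (Fin k) ℤ) Finset.univ (fun _ : Fin k => 1)
      (fun i => MvPolynomial.X i) (fun i _ => le_refl 1)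
    simpa [pow_one] using this
  have hkg : Pg * g = - Dop g := by
    refine key_identity (Finset.Icc 1 m) id b fun n hn => ?_
    exact (Finset.mem_Icc.mp hn).1
  have h1 : ∀ i ≤ m,
      PowerSeries.coeff i f = PowerSeries.coeff i g := hb m hm
  have h2 : ∀ i ≤ m,
      PowerSeries.coeff i (Dop f) = PowerSeries.coeff i (Dop g) := by
    intro i hi
    rw [coeff_Dop, coeff_Dop, h1 i hi]
  have h3 : ∀ i ≤ m,
      PowerSeries.coeff i (Pf * f) = PowerSeries.coeff i (Pg * g) := by
    intro i hi
    rw [hkf, hkg, map_neg, map_neg, h2 i hi]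
  have h4 : ∀ i ≤ m,
      PowerSeries.coeff i (Pg * g) = PowerSeries.coeff i (Pg * f) :=
    coeff_mul_congr Pg m fun i hi => (h1 i hi).symm
  have h5 : ∀ i ≤ m, PowerSeries.coeff i ((Pf - Pg) * f) = 0 := by
    intro i hi
    rw [sub_mul, map_sub, h3 i hi, h4 i hi, sub_self]
  have hf0 : PowerSeries.coeff 0 f = 1 := by
    rw [hfdef, PowerSeries.coeff_zero_eq_constantCoeff, map_prod]
    simp
  have h6 : PowerSeries.coeff m Pf = PowerSeries.coeff m Pg := by
    have := coeff_cancel f (Pf - Pg) hf0 m h5 m le_rfl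
    rw [map_sub] at this
    exact sub_eq_zero.mp this
  have hm0 : m ≠ 0 := by omega
  have hPfm : PowerSeries.coeff m Pf = ∑ i : Fin k, MvPolynomial.X i ^ m := by
    rw [hPf, map_sum]
    refine Finset.sum_congr rfl fun i _ => ?_
    simp [Sser, hm0]
  have hPgm : PowerSeries.coeff m Pg
      = ∑ d ∈ Nat.divisors m, (d : MvPolynomial (Fin k) ℤ) * b d ^ (m / d) := by
    rw [hPg, map_sum]
    rw [Nat.divisors, Finset.sum_filter, ← Finset.Ico_add_one_right_eq_Icc]
    refine Finset.sum_congr rfl fun n hn => ?_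
    simp only [Sser, PowerSeries.coeff_mk, hm0, ne_eq, not_false_iff, and_true]
  rw [← hPfm, h6, hPgm]
end

section
/- Let p be a prime and let k be a commutative ring of characteristic p. Let f ∈ k[X] be a polynomial that is additive, i.e., in the polynomial ring k[X,Y] in two variables the identity f(X+Y) = f(X) + f(Y) holds, where f(g) denotes the evaluation of f at the polynomial g. Then f lies in the k-linear span of the monomials X^{p^i} for i ∈ ℕ; that is, f = ∑_i a_i X^{p^i} for finitely many coefficients a_i ∈ k. -/
/-!
Writing `Y` for a second variable, the coefficient of `Y ^ a` in `f (X + Y) = f X + f Y` says that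
the `a`-th Hasse derivative of `f` is the constant `f.coeff a` for `a ≠ 0`; reading off its
coefficients gives `n.choose a * f.coeff n = 0` for `0 < a < n`, and also `f.coeff 0 = 0`.
In characteristic `p`, a nonzero `f.coeff n` therefore forces `p` to divide every `n.choose a`
with `0 < a < n`, which by Lucas's theorem happens only when `n` is a power of `p`.
-/

namespace Polynomial

variable {R : Type*}

section Semiring

variable [Semiring R]

theorem hasseDeriv_map {S : Type*} [Semiring S] (φ : R →+* S) (a : ℕ) (f : R[X]) :
    hasseDeriv a (f.map φ) = (hasseDeriv a f).map φ := by
  ext n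
  simp [hasseDeriv_coeff]

theorem eval_X_map_C (f : R[X]) : (f.map C).eval X = f := by
  rw [eval_map, eval₂_C_X]

theorem coeff_taylor_X_map_C (f : R[X]) (a : ℕ) :
    (taylor (X : R[X]) (f.map C)).coeff a = hasseDeriv a f := by
  rw [taylor_coeff, hasseDeriv_map, eval_X_map_C]

theorem mem_span_range_X_pow {ι : Type*} (e : ι → ℕ) {f : R[X]}
    (h : ∀ n ∈ f.support, ∃ i, e i = n) :
    f ∈ Submodule.span R (Set.range fun i => (X : R[X]) ^ e i) := by
  rw [f.as_sum_support]
  refine Submodule.sum_mem _ fun n hn => ?_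
  obtain ⟨i, rfl⟩ := h n hn
  rw [← smul_X_eq_monomial]
  exact Submodule.smul_mem _ _ (Submodule.subset_span ⟨i, rfl⟩)

end Semiring

section CommSemiring

variable [CommSemiring R]

def IsAdditive (f : R[X]) : Prop :=
  aeval (MvPolynomial.X 0 + MvPolynomial.X 1 : MvPolynomial (Fin 2) R) f =
    aeval (MvPolynomial.X 0 : MvPolynomial (Fin 2) R) f +
      aeval (MvPolynomial.X 1 : MvPolynomial (Fin 2) R) f

theorem aeval_eq_comp_map_C (f : R[X]) (q : R[X][X]) : aeval q f = (f.map C).comp q := by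
  rw [comp_eq_aeval, ← algebraMap_eq, aeval_map_algebraMap]

/-- Additivity in `R[Y][X]`, where `Y = C X`: `f (X + Y) = f X + f Y`. -/
theorem IsAdditive.taylor_X_map_C {f : R[X]} (hf : f.IsAdditive) :
    taylor (X : R[X]) (f.map C) = f.map C + C f := by
  have h := congrArg (MvPolynomial.aeval ![(X : R[X][X]), C X]) hf
  simp only [map_add, ← aeval_algHom_apply, MvPolynomial.aeval_X,
    Matrix.cons_val_zero, Matrix.cons_val_one] at h
  rwa [aeval_eq_comp_map_C, aeval_eq_comp_map_C, aeval_eq_comp_map_C, comp_X, comp_C,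
    eval_X_map_C, ← taylor_apply] at h

theorem IsAdditive.hasseDeriv_eq_C_coeff {f : R[X]} (hf : f.IsAdditive) {a : ℕ} (ha : a ≠ 0) :
    hasseDeriv a f = C (f.coeff a) := by
  have h := congrArg (coeff · a) hf.taylor_X_map_C
  rwa [coeff_taylor_X_map_C, coeff_add, coeff_map, coeff_C_of_ne_zero ha, add_zero] at h

theorem IsAdditive.choose_mul_coeff_eq_zero {f : R[X]} (hf : f.IsAdditive) {a n : ℕ}
    (ha : a ≠ 0) (han : a < n) : (n.choose a : R) * f.coeff n = 0 := by
  have h := congrArg (coeff · (n - a)) (hf.hasseDeriv_eq_C_coeff ha)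
  rwa [hasseDeriv_coeff, Nat.sub_add_cancel han.le,
    coeff_C_of_ne_zero (Nat.sub_ne_zero_of_lt han)] at h

end CommSemiring

section CommRing

variable [CommRing R]

theorem IsAdditive.coeff_zero_eq_zero {f : R[X]} (hf : f.IsAdditive) : f.coeff 0 = 0 := by
  have h := congrArg (coeff · 0) hf.taylor_X_map_C
  rwa [coeff_taylor_X_map_C, hasseDeriv_zero, LinearMap.id_apply, coeff_add, coeff_map,
    coeff_C_zero, right_eq_add, C_eq_zero] at h

theorem IsAdditive.eq_pow_multiplicity_of_coeff_ne_zero (p : ℕ) [Fact p.Prime] [CharP R p]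
    {f : R[X]} (hf : f.IsAdditive) {n : ℕ} (hn : f.coeff n ≠ 0) :
    n = p ^ multiplicity p n := by
  have hn0 : 0 < n := Nat.pos_of_ne_zero fun h => hn (h ▸ hf.coeff_zero_eq_zero)
  refine Choose.eq_pow_multiplicity_of_choose_modEq_zero_nat hn0 fun a ha => ?_
  rw [Finset.mem_Icc] at ha
  rw [Nat.modEq_zero_iff_dvd]
  by_contra hp
  have hu : IsUnit (n.choose a : R) := (CharP.isUnit_natCast_iff Fact.out).mpr hp
  exact hn (hu.mul_right_eq_zero.mp (hf.choose_mul_coeff_eq_zero (by omega) (by omega)))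

end CommRing

end Polynomial

/-- Over a commutative ring of characteristic `p`, every additive polynomial
(`f(X+Y) = f(X) + f(Y)` in two variables) lies in the `k`-span of the monomials
`X^{p^i}`. -/
theorem additive_polynomial_mem_span_frobenius_powers
    (p : ℕ) [Fact p.Prime] (k : Type*) [CommRing k] [CharP k p]
    (f : Polynomial k)
    (hf : Polynomial.aeval (MvPolynomial.X 0 + MvPolynomial.X 1 : MvPolynomial (Fin 2) k) f =
      Polynomial.aeval (MvPolynomial.X 0 : MvPolynomial (Fin 2) k) f +
        Polynomial.aeval (MvPolynomial.X 1 : MvPolynomial (Fin 2) k) f) :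
    f ∈ Submodule.span k (Set.range fun i : ℕ => (Polynomial.X : Polynomial k) ^ p ^ i) := by
  have hf : f.IsAdditive := hf
  refine Polynomial.mem_span_range_X_pow _ fun n hn => ⟨multiplicity p n, ?_⟩
  exact (hf.eq_pow_multiplicity_of_coeff_ne_zero p (Polynomial.mem_support_iff.mp hn)).symm
end

section
/- Let O be a Dedekind domain and let M and N be torsion-free O-modules (for all nonzero c ∈ O and m ∈ M, c·m = 0 implies m = 0, and likewise for N). Then the tensor product M ⊗_O N is a torsion-free O-module. -/
open scoped TensorProduct

section PID

variable {A : Type*} [CommRing A] [IsDomain A] [IsPrincipalIdealRing A]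

/-- A torsion-free module over a PID is flat. -/
theorem TorsionFreeAux.flat_of_torsionFree (M : Type*) [AddCommGroup M] [Module A M]
    [NoZeroSMulDivisors A M] : Module.Flat A M := by
  rw [Module.Flat.iff_rTensor_injective']
  intro I
  obtain ⟨a, rfl⟩ : I.IsPrincipal := IsPrincipalIdealRing.principal I
  rw [injective_iff_map_eq_zero]
  intro x
  have ha : a ∈ Ideal.span {a} := Submodule.mem_span_singleton_self a
  have hrep : ∃ m : M, x = (⟨a, ha⟩ : Ideal.span {a}) ⊗ₜ[A] m := by
    induction x with
    | zero => exact ⟨0, (TensorProduct.tmul_zero _ _).symm⟩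
    | tmul i m =>
        obtain ⟨i, hi⟩ := i
        obtain ⟨r, rfl⟩ := Submodule.mem_span_singleton.mp hi
        refine ⟨r • m, ?_⟩
        have : (⟨r • a, hi⟩ : Ideal.span {a}) = r • ⟨a, ha⟩ := rfl
        rw [this, TensorProduct.smul_tmul]
    | add x y ihx ihy =>
        obtain ⟨m₁, rfl⟩ := ihx
        obtain ⟨m₂, rfl⟩ := ihy
        exact ⟨m₁ + m₂, (TensorProduct.tmul_add _ _ _).symm⟩
  obtain ⟨m, rfl⟩ := hrep
  intro hx
  rcases eq_or_ne a 0 with rfl | ha0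
  · rw [show (⟨(0 : A), ha⟩ : Ideal.span {(0 : A)}) = 0 from rfl, TensorProduct.zero_tmul]
  · have : a ⊗ₜ[A] m = 0 := by
      simpa using hx
    have ham : a • m = 0 := by
      have := congrArg (TensorProduct.lid A M) this
      simpa using this
    have hm : m = 0 := by
      rcases smul_eq_zero.mp ham with h | h
      · exact absurd h ha0
      · exact h
    rw [hm, TensorProduct.tmul_zero]

/-- Over a PID, the tensor product of torsion-free modules is torsion-free. -/
theorem TorsionFreeAux.noZeroSMulDivisors_tensor (M N : Type*) [AddCommGroup M] [Module A M]
    [AddCommGroup N] [Module A N] [NoZeroSMulDivisors A M] [NoZeroSMulDivisors A N] :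
    NoZeroSMulDivisors A (M ⊗[A] N) := by
  haveI := TorsionFreeAux.flat_of_torsionFree (A := A) M
  refine ⟨fun {c z} h => or_iff_not_imp_left.mpr fun hc => ?_⟩
  have hinj : Function.Injective (LinearMap.lTensor M (LinearMap.lsmul A N c)) := by
    apply Module.Flat.lTensor_preserves_injective_linearMap
    intro n₁ n₂ hn
    exact smul_right_injective N hc hn
  have key : LinearMap.lTensor M (LinearMap.lsmul A N c) z = c • z := by
    have : LinearMap.lTensor M (LinearMap.lsmul A N c) = c • LinearMap.id := by
      apply TensorProduct.ext'
      intro m n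
      simp [TensorProduct.tmul_smul]
    rw [this]
    simp
  apply hinj
  rw [key, h, map_zero]

end PID

section Localize

variable (O : Type*) [CommRing O] [IsDomain O]

/-- The base change of a torsion-free module to a localization (at a submonoid of
nonzerodivisors) is torsion-free. -/
theorem TorsionFreeAux.noZeroSMulDivisors_baseChange (S : Submonoid O)
    (hS : S ≤ nonZeroDivisors O) (A : Type*) [CommRing A] [Algebra O A] [IsLocalization S A]
    (M : Type*) [AddCommGroup M] [Module O M] [NoZeroSMulDivisors O M] :
    NoZeroSMulDivisors A (A ⊗[O] M) := by
  haveI : IsDomain A := IsLocalization.isDomain_of_le_nonZeroDivisors A hS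
  set f : M →ₗ[O] A ⊗[O] M := TensorProduct.mk O A M 1 with hf
  haveI : IsLocalizedModule S f :=
    (isLocalizedModule_iff_isBaseChange S A f).mpr (TensorProduct.isBaseChange O M A)
  refine ⟨fun {a x} h => or_iff_not_imp_left.mpr fun ha => ?_⟩
  obtain ⟨⟨m, s⟩, hms⟩ := IsLocalizedModule.surj S f x
  simp only at hms
  obtain ⟨⟨r, t⟩, rfl⟩ := IsLocalization.mk'_surjective S a
  dsimp only at h ha
  have hr : r ≠ 0 := by
    rintro rfl
    exact ha (IsLocalization.mk'_zero _)
  have hafm : IsLocalization.mk' A r t • f m = 0 := by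
    rw [← hms, smul_comm, h, smul_zero]
  have key : f (r • m) = 0 := by
    rw [map_smul, ← algebraMap_smul A r (f m), ← IsLocalization.mk'_spec A r t,
      mul_smul, algebraMap_smul, smul_comm, hafm, smul_zero]
  obtain ⟨s', hs'⟩ := (IsLocalizedModule.eq_zero_iff S f).mp key
  rw [Submonoid.smul_def, smul_smul] at hs'
  have hne : (s' : O) * r ≠ 0 :=
    mul_ne_zero (nonZeroDivisors.ne_zero (hS s'.2)) hr
  have hm : m = 0 := by
    rcases smul_eq_zero.mp hs' with h' | h'
    · exact absurd h' hne
    · exact h'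
  have hx0 : (algebraMap O A (s : O)) • x = 0 := by
    rw [algebraMap_smul, ← Submonoid.smul_def, hms, hm, map_zero]
  obtain ⟨u, hu⟩ := IsLocalization.map_units A s
  calc x = ((u⁻¹ : Aˣ) : A) • ((u : A) • x) := by
        rw [smul_smul, Units.inv_mul, one_smul]
    _ = 0 := by rw [hu, hx0, smul_zero]

end Localize

/-- The localization of a Dedekind domain at a prime is a PID. -/
theorem TorsionFreeAux.pid_localization_atPrime (O : Type*) [CommRing O] [IsDomain O]
    [IsDedekindDomain O] (P : Ideal O) [P.IsPrime] :
    IsPrincipalIdealRing (Localization.AtPrime P) := by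
  apply IsPrincipalIdealRing.of_finite_primes
  apply Set.Finite.subset
    ((Set.finite_singleton (IsLocalRing.maximalIdeal (Localization.AtPrime P))).insert ⊥)
  intro I hI
  have hI : I.IsPrime := hI
  rcases eq_or_ne I ⊥ with rfl | hbot
  · exact Set.mem_insert _ _
  · exact Set.mem_insert_of_mem _ (IsLocalRing.eq_maximalIdeal (hI.isMaximal hbot))

/-- Over a Dedekind domain, the tensor product of two torsion-free modules is
torsion-free. -/
theorem tensorProduct_torsionFree_of_dedekind
    (O : Type*) [CommRing O] [IsDomain O] [IsDedekindDomain O]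
    (M N : Type*) [AddCommGroup M] [Module O M] [AddCommGroup N] [Module O N]
    (hM : ∀ (c : O) (m : M), c ≠ 0 → c • m = 0 → m = 0)
    (hN : ∀ (c : O) (n : N), c ≠ 0 → c • n = 0 → n = 0)
    (c : O) (z : M ⊗[O] N) (hc : c ≠ 0) (hz : c • z = 0) : z = 0 := by
  haveI : NoZeroSMulDivisors O M :=
    ⟨fun {c m} h => or_iff_not_imp_left.mpr fun hc => hM c m hc h⟩
  haveI : NoZeroSMulDivisors O N :=
    ⟨fun {c n} h => or_iff_not_imp_left.mpr fun hc => hN c n hc h⟩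
  suffices h : ∀ (P : Ideal O) [P.IsMaximal],
      (TensorProduct.mk O (Localization.AtPrime P) (M ⊗[O] N)) 1 z = 0 by
    exact @Module.eq_zero_of_localization_maximal O (M ⊗[O] N) _ _ _
      (fun P _ => Localization.AtPrime P ⊗[O] (M ⊗[O] N))
      (fun P _ => inferInstance) (fun P _ => inferInstance)
      (fun P _ => (TensorProduct.mk O (Localization.AtPrime P) (M ⊗[O] N)) 1)
      (fun P _ => (isLocalizedModule_iff_isBaseChange P.primeCompl _ _).mpr
        (TensorProduct.isBaseChange O (M ⊗[O] N) (Localization.AtPrime P)))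
      z h
  intro P hP
  set A := Localization.AtPrime P with hA
  have hle : P.primeCompl ≤ nonZeroDivisors O := P.primeCompl_le_nonZeroDivisors
  haveI : IsDomain A := IsLocalization.isDomain_of_le_nonZeroDivisors A hle
  haveI : IsPrincipalIdealRing A := TorsionFreeAux.pid_localization_atPrime O P
  haveI : NoZeroSMulDivisors A (A ⊗[O] M) :=
    TorsionFreeAux.noZeroSMulDivisors_baseChange O P.primeCompl hle A M
  haveI : NoZeroSMulDivisors A (A ⊗[O] N) :=
    TorsionFreeAux.noZeroSMulDivisors_baseChange O P.primeCompl hle A N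
  haveI : NoZeroSMulDivisors A ((A ⊗[O] M) ⊗[A] (A ⊗[O] N)) :=
    TorsionFreeAux.noZeroSMulDivisors_tensor (A ⊗[O] M) (A ⊗[O] N)
  set e := TensorProduct.AlgebraTensorModule.distribBaseChange O A M N with he
  show (1 : A) ⊗ₜ[O] z = 0
  have hcz : (algebraMap O A c) • e ((1 : A) ⊗ₜ[O] z) = 0 := by
    rw [← map_smul, algebraMap_smul, ← TensorProduct.tmul_smul, hz, TensorProduct.tmul_zero,
      map_zero]
  have hcne : algebraMap O A c ≠ 0 := fun h0 =>
    hc (IsLocalization.injective A hle (by rw [h0, map_zero]))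
  have h0 : e ((1 : A) ⊗ₜ[O] z) = 0 := (smul_eq_zero.mp hcz).resolve_left hcne
  exact e.map_eq_zero_iff.mp h0
end
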